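/- Fix (x,y) with y ≠ 0 and let N ∈ ℝⁿ satisfy Σ_{i,j} g_{ij} N^i N^j = 1 and Σ_{i,j} g_{ij} y^i N^j = 0. Then Σ_{i,j} g*_{ij} N^i N^j = τ + (Σ_i b_i N^i)², where g*_{ij} = ½ ∂̇_i∂̇_j (L*²) and τ = e^{σ} L*/L. -/

import Mathlib

open Real

/-- Second partial derivative with respect to the `y`-coordinates:
`∂̇_i ∂̇_j f` evaluated at `y`. -/
noncomputable def pdy2 {n : ℕ} (f : (Fin n → ℝ) → ℝ) (i j : Fin n) (y : Fin n → ℝ) : ℝ :=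
  fderiv ℝ (fun z => fderiv ℝ f z (Pi.single j 1)) y (Pi.single i 1)

/-- The fundamental (metric) tensor `g_{ij} = ½ ∂̇_i∂̇_j (L²)` of a Finsler metric `L`. -/
noncomputable def gten {n : ℕ} (L : (Fin n → ℝ) → (Fin n → ℝ) → ℝ)
    (x : Fin n → ℝ) (i j : Fin n) (y : Fin n → ℝ) : ℝ :=
  (1 / 2) * pdy2 (fun z => (L x z) ^ 2) i j y

/-- The Randers conformal change `L*(x,y) = e^{σ(x)} L(x,y) + β(x,y)`. -/
noncomputable def RandersChange {n : ℕ} (L : (Fin n → ℝ) → (Fin n → ℝ) → ℝ)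
    (σ : (Fin n → ℝ) → ℝ) (b : (Fin n → ℝ) → (Fin n → ℝ))
    (x y : Fin n → ℝ) : ℝ :=
  Real.exp (σ x) * L x y + ∑ j, b x j * y j

/-- The factor `τ = e^{σ} L*/L` of the Randers conformal change. -/
noncomputable def tauRC {n : ℕ} (L : (Fin n → ℝ) → (Fin n → ℝ) → ℝ)
    (σ : (Fin n → ℝ) → ℝ) (b : (Fin n → ℝ) → (Fin n → ℝ))
    (x y : Fin n → ℝ) : ℝ :=
  Real.exp (σ x) * RandersChange L σ b x y / L x y

open Filter Topology

/-! Write `F = L x` and `H = D²F y`. Differentiating along the ray through `y` gives Euler's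
relations `DF y y = F y` and `D²F y y = 0`. Since `D²(G²)(v, w) = 2 (DG v · DG w + G · D²G (v, w))`,
`g(y, N) = 0` becomes `F y · DF y N = 0`, so `DF y N = 0`, and then `g(N, N) = 1` becomes
`F y · H(N, N) = 1`. For `L* = e^σ F + β` we have `D²L* = e^σ H`, hence
`g*(N, N) = (β N)² + L* · e^σ H(N, N) = (β N)² + τ`. -/

section

variable {E F : Type*} [NormedAddCommGroup E] [NormedSpace ℝ E]
  [NormedAddCommGroup F] [NormedSpace ℝ F]

theorem fderiv_apply_self_of_smul_eq_pow_smul {g : E → F} {y : E} {k : ℕ}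
    (hg : DifferentiableAt ℝ g y)
    (hhom : (fun c : ℝ => g (c • y)) =ᶠ[𝓝 1] fun c => c ^ k • g y) :
    fderiv ℝ g y y = (k : ℝ) • g y := by
  have hray : HasDerivAt (fun t : ℝ => t • y) y 1 := by
    simpa using (hasDerivAt_id (1 : ℝ)).smul_const y
  have hchain : HasDerivAt (fun t : ℝ => g (t • y)) (fderiv ℝ g y y) 1 := by
    refine HasFDerivAt.comp_hasDerivAt (l := g) 1 ?_ hray
    simpa using hg.hasFDerivAt
  have hpow : HasDerivAt (fun t : ℝ => t ^ k • g y) ((k : ℝ) • g y) 1 := by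
    simpa using (hasDerivAt_pow k (1 : ℝ)).smul_const (g y)
  exact (hchain.congr_of_eventuallyEq hhom.symm).unique hpow

theorem fderiv_smul_eq_of_smul_eq {f : E → F} {y : E} {c : ℝ} (hc : c ≠ 0)
    (hf : DifferentiableAt ℝ f (c • y)) (hhom : (fun z => f (c • z)) =ᶠ[𝓝 y] fun z => c • f z) :
    fderiv ℝ f (c • y) = fderiv ℝ f y := by
  have hcomp : HasFDerivAt (fun z => f (c • z)) (c • fderiv ℝ f (c • y)) y := by
    have hlin : c • fderiv ℝ f (c • y) = (fderiv ℝ f (c • y)).comp (c • .id ℝ E) := by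
      ext v; simp
    exact hlin ▸ hf.hasFDerivAt.comp y ((hasFDerivAt_id y).const_smul c)
  have hscaled : fderiv ℝ (fun z => c • f z) y = c • fderiv ℝ f y :=
    congrFun (fderiv_const_smul_field (𝕜 := ℝ) (f := f) c) y
  rw [(hcomp.congr_of_eventuallyEq hhom.symm).fderiv] at hscaled
  exact smul_right_injective _ hc hscaled

theorem ContDiffAt.differentiableAt_fderiv {g : E → F} {y : E} (hg : ContDiffAt ℝ 2 g y) :
    DifferentiableAt ℝ (fderiv ℝ g) y :=
  (hg.fderiv_right (m := 1) le_rfl).differentiableAt one_ne_zero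

variable {f : E → ℝ} {y : E}

theorem fderiv_apply_self_of_homogeneous (hf : DifferentiableAt ℝ f y)
    (hhom : ∀ᶠ z in 𝓝 y, ∀ c : ℝ, 0 < c → f (c • z) = c * f z) :
    fderiv ℝ f y y = f y := by
  have hray : (fun c : ℝ => f (c • y)) =ᶠ[𝓝 1] fun c => c ^ 1 • f y := by
    filter_upwards [lt_mem_nhds one_pos] with c hc
    simpa using hhom.self_of_nhds c hc
  simpa using fderiv_apply_self_of_smul_eq_pow_smul hf hray

theorem fderiv_fderiv_apply_self_of_homogeneous (hf : ContDiffAt ℝ 2 f y)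
    (hhom : ∀ᶠ z in 𝓝 y, ∀ c : ℝ, 0 < c → f (c • z) = c * f z) :
    fderiv ℝ (fderiv ℝ f) y y = 0 := by
  have hray : Tendsto (fun c : ℝ => c • y) (𝓝 1) (𝓝 y) :=
    (continuous_id.smul continuous_const : Continuous fun c : ℝ => c • y).tendsto' 1 y
      (one_smul ℝ y)
  have hdiff : ∀ᶠ c : ℝ in 𝓝 1, DifferentiableAt ℝ f (c • y) :=
    hray.eventually ((hf.eventually (by simp)).mono fun z hz => hz.differentiableAt (by simp))
  have hconst : (fun c : ℝ => fderiv ℝ f (c • y)) =ᶠ[𝓝 1] fun c => c ^ 0 • fderiv ℝ f y := by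
    filter_upwards [lt_mem_nhds one_pos, hdiff] with c hc hcy
    rw [pow_zero, one_smul]
    exact fderiv_smul_eq_of_smul_eq hc.ne' hcy (hhom.mono fun z hz => by simpa using hz c hc)
  simpa using fderiv_apply_self_of_smul_eq_pow_smul hf.differentiableAt_fderiv hconst

theorem fderiv_fderiv_sq_apply (hf : ContDiffAt ℝ 2 f y) (v w : E) :
    fderiv ℝ (fderiv ℝ fun z => f z ^ 2) y v w
      = 2 * (fderiv ℝ f y v * fderiv ℝ f y w + f y * fderiv ℝ (fderiv ℝ f) y v w) := by
  have hfderiv : fderiv ℝ (fun z => f z ^ 2) =ᶠ[𝓝 y] fun z => (2 * f z) • fderiv ℝ f z := by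
    filter_upwards [hf.eventually (by simp)] with z hz
    simpa using ((hz.differentiableAt (by simp)).hasFDerivAt.pow 2).fderiv
  have hf' := hf.differentiableAt (by simp)
  have hf'' := hf.differentiableAt_fderiv
  rw [hfderiv.fderiv_eq, ((hf'.hasFDerivAt.const_mul 2).fun_smul hf''.hasFDerivAt).fderiv]
  simp only [add_apply, smul_apply, ContinuousLinearMap.smulRight_apply, smul_eq_mul]
  ring

theorem fderiv_fderiv_const_mul_add_clm_sq_apply (hf : ContDiffAt ℝ 2 f y) (s : ℝ)
    (ℓ : E →L[ℝ] ℝ) (v w : E) :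
    fderiv ℝ (fderiv ℝ fun z => (s * f z + ℓ z) ^ 2) y v w
      = 2 * ((s * fderiv ℝ f y v + ℓ v) * (s * fderiv ℝ f y w + ℓ w)
        + (s * f y + ℓ y) * (s * fderiv ℝ (fderiv ℝ f) y v w)) := by
  have hg : ContDiffAt ℝ 2 (fun z => s * f z + ℓ z) y :=
    (contDiffAt_const.mul hf).add ℓ.contDiff.contDiffAt
  have hfderiv : fderiv ℝ (fun z => s * f z + ℓ z) =ᶠ[𝓝 y] fun z => s • fderiv ℝ f z + ℓ := by
    filter_upwards [hf.eventually (by simp)] with z hz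
    exact (((hz.differentiableAt (by simp)).hasFDerivAt.const_mul s).add ℓ.hasFDerivAt).fderiv
  have hf'' := hf.differentiableAt_fderiv
  rw [fderiv_fderiv_sq_apply hg, hfderiv.fderiv_eq, hfderiv.self_of_nhds, fderiv_add_const,
    fderiv_fun_const_smul hf'']
  simp

theorem fderiv_apply_eq_zero_of_fderiv_fderiv_sq_self_apply_eq_zero (hf : ContDiffAt ℝ 2 f y)
    (hhom : ∀ᶠ z in 𝓝 y, ∀ c : ℝ, 0 < c → f (c • z) = c * f z) (hfy : f y ≠ 0) {v : E}
    (horth : fderiv ℝ (fderiv ℝ fun z => f z ^ 2) y y v = 0) :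
    fderiv ℝ f y v = 0 := by
  rw [fderiv_fderiv_sq_apply hf, fderiv_apply_self_of_homogeneous (hf.differentiableAt (by simp))
    hhom, fderiv_fderiv_apply_self_of_homogeneous hf hhom] at horth
  simpa [hfy] using horth

end

theorem ContinuousLinearMap.sum_sum_apply_single_mul {ι : Type*} [Fintype ι] [DecidableEq ι]
    (B : (ι → ℝ) →L[ℝ] (ι → ℝ) →L[ℝ] ℝ) (v w : ι → ℝ) :
    ∑ i, ∑ j, B (Pi.single i 1) (Pi.single j 1) * v i * w j = B v w := by
  conv_rhs => rw [← Finset.univ_sum_single v, ← Finset.univ_sum_single w]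
  have hsingle : ∀ (u : ι → ℝ) i, Pi.single i (u i) = u i • (Pi.single i 1 : ι → ℝ) := by
    intro u i
    rw [← Pi.single_smul, smul_eq_mul, mul_one]
  simp only [hsingle, map_sum, map_smul, FunLike.coe_sum, Finset.sum_apply,
    FunLike.coe_smul, Pi.smul_apply, smul_eq_mul, Finset.mul_sum]
  rw [Finset.sum_comm]
  refine Finset.sum_congr rfl fun i _ => Finset.sum_congr rfl fun j _ => by ring

theorem pdy2_eq_fderiv_fderiv {n : ℕ} {f : (Fin n → ℝ) → ℝ} {y : Fin n → ℝ}
    (hf : DifferentiableAt ℝ (fderiv ℝ f) y) (i j : Fin n) :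
    pdy2 f i j y = fderiv ℝ (fderiv ℝ f) y (Pi.single i 1) (Pi.single j 1) := by
  rw [pdy2, fderiv_clm_apply hf (differentiableAt_const _)]
  simp

theorem sum_sum_gten_mul_mul {n : ℕ} (K : (Fin n → ℝ) → (Fin n → ℝ) → ℝ) (x y v w : Fin n → ℝ)
    (hK : DifferentiableAt ℝ (fderiv ℝ fun z => K x z ^ 2) y) :
    ∑ i, ∑ j, gten K x i j y * v i * w j = fderiv ℝ (fderiv ℝ fun z => K x z ^ 2) y v w / 2 := by
  simp only [gten, pdy2_eq_fderiv_fderiv hK, mul_assoc, ← Finset.mul_sum]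
  simp only [← mul_assoc, ContinuousLinearMap.sum_sum_apply_single_mul]
  ring

theorem randers_conformal_normal_norm_general
    {n : ℕ} (U : Set (Fin n → ℝ)) (hU : IsOpen U)
    (L : (Fin n → ℝ) → (Fin n → ℝ) → ℝ)
    (hL : ContDiffOn ℝ (⊤ : ℕ∞)
      (fun p : (Fin n → ℝ) × (Fin n → ℝ) => L p.1 p.2)
      (U ×ˢ {y : Fin n → ℝ | y ≠ 0}))
    (hLpos : ∀ x ∈ U, ∀ y : Fin n → ℝ, y ≠ 0 → 0 < L x y)
    (hLhom : ∀ x ∈ U, ∀ y : Fin n → ℝ, y ≠ 0 → ∀ c : ℝ, 0 < c →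
      L x (c • y) = c * L x y)
    (σ : (Fin n → ℝ) → ℝ)
    (b : (Fin n → ℝ) → (Fin n → ℝ))
    (x : Fin n → ℝ) (hx : x ∈ U) (y : Fin n → ℝ) (hy : y ≠ 0)
    (N : Fin n → ℝ)
    (hN1 : ∑ i, ∑ j, gten L x i j y * N i * N j = 1)
    (hN2 : ∑ i, ∑ j, gten L x i j y * y i * N j = 0) :
    ∑ i, ∑ j, gten (RandersChange L σ b) x i j y * N i * N j
      = tauRC L σ b x y + (∑ i, b x i * N i) ^ 2 := by
  have hf : ContDiffAt ℝ 2 (L x) y := by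
    have hLxy := hL.contDiffAt ((hU.prod isOpen_ne).mem_nhds (Set.mk_mem_prod hx hy))
    exact (hLxy.comp y (contDiffAt_const.prodMk contDiffAt_id)).of_le
      (WithTop.coe_le_coe.mpr le_top)
  have hhom : ∀ᶠ z in 𝓝 y, ∀ c : ℝ, 0 < c → L x (c • z) = c * L x z :=
    eventually_of_mem (isOpen_ne.mem_nhds hy) fun z hz c hc => hLhom x hx z hz c hc
  have hLy : L x y ≠ 0 := (hLpos x hx y hy).ne'
  set ℓ : (Fin n → ℝ) →L[ℝ] ℝ := ∑ j, b x j • ContinuousLinearMap.proj j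
  have hℓ (z : Fin n → ℝ) : ∑ j, b x j * z j = ℓ z := by simp [ℓ]
  have hRanders :
      (fun z => RandersChange L σ b x z ^ 2) = fun z => (exp (σ x) * L x z + ℓ z) ^ 2 := by
    simp only [RandersChange, hℓ]
  have hL2 : DifferentiableAt ℝ (fderiv ℝ fun z => L x z ^ 2) y :=
    (hf.pow 2).differentiableAt_fderiv
  have hR2 : DifferentiableAt ℝ (fderiv ℝ fun z => RandersChange L σ b x z ^ 2) y :=
    hRanders ▸ (((contDiffAt_const.mul hf).add ℓ.contDiff.contDiffAt).pow 2).differentiableAt_fderiv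
  rw [sum_sum_gten_mul_mul _ _ _ _ _ hL2] at hN1 hN2
  rw [sum_sum_gten_mul_mul _ _ _ _ _ hR2]
  have hDN := fderiv_apply_eq_zero_of_fderiv_fderiv_sq_self_apply_eq_zero hf hhom hLy (by linarith)
  have hunit : L x y * fderiv ℝ (fderiv ℝ (L x)) y N N = 1 := by
    rw [fderiv_fderiv_sq_apply hf, hDN] at hN1
    linarith
  rw [hRanders, fderiv_fderiv_const_mul_add_clm_sq_apply hf, hDN, tauRC, RandersChange, hℓ, hℓ]
  field_simp
  linear_combination exp (σ x) * (exp (σ x) * L x y + ℓ y) * hunit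

/-- If `N` is a `g`-unit vector `g`-orthogonal to `y`, then
`g*_{ij} N^i N^j = τ + (b_i N^i)²`. -/
theorem randers_conformal_normal_norm
    {n : ℕ} (U : Set (Fin n → ℝ)) (hU : IsOpen U)
    (L : (Fin n → ℝ) → (Fin n → ℝ) → ℝ)
    (hL : ContDiffOn ℝ (⊤ : ℕ∞)
      (fun p : (Fin n → ℝ) × (Fin n → ℝ) => L p.1 p.2)
      (U ×ˢ {y : Fin n → ℝ | y ≠ 0}))
    (hLpos : ∀ x ∈ U, ∀ y : Fin n → ℝ, y ≠ 0 → 0 < L x y)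
    (hLhom : ∀ x ∈ U, ∀ y : Fin n → ℝ, y ≠ 0 → ∀ c : ℝ, 0 < c →
      L x (c • y) = c * L x y)
    (σ : (Fin n → ℝ) → ℝ) (hσ : ContDiffOn ℝ (⊤ : ℕ∞) σ U)
    (b : (Fin n → ℝ) → (Fin n → ℝ)) (hb : ContDiffOn ℝ (⊤ : ℕ∞) b U)
    (x : Fin n → ℝ) (hx : x ∈ U) (y : Fin n → ℝ) (hy : y ≠ 0)
    (N : Fin n → ℝ)
    (hN1 : ∑ i, ∑ j, gten L x i j y * N i * N j = 1)
    (hN2 : ∑ i, ∑ j, gten L x i j y * y i * N j = 0) :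
    ∑ i, ∑ j, gten (RandersChange L σ b) x i j y * N i * N j
      = tauRC L σ b x y + (∑ i, b x i * N i) ^ 2 :=
  randers_conformal_normal_norm_general U hU L hL hLpos hLhom σ b x hx y hy N hN1 hN2
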